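/- For α ∈ ℝ_{>0} define S(α) = 1/2 − ζ(2)·α + Σ_{a/q ∈ ℚ ∩ (0,α]} μ(q)²/(φ(q)²σ(q)), where the sum is over all rational numbers in (0, α] written in lowest terms a/q with a, q coprime positive integers. Then the defining sum converges absolutely, and S(α+1) = S(α) for all α > 0. -/

import Mathlib

/-!
Group the fractions `a/q ∈ (0, α]` by their denominator. For fixed `q` the numerators are the
`a ≤ αq` coprime to `q`, each of weight `μ(q)²/(φ(q)²σ(q))`; replacing `α` by `α + 1` adds one
full period of residues, i.e. exactly `φ(q)` new numerators, so the sum grows by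
`Σ_q μ(q)²/(φ(q)σ(q))`. This series is multiplicative with Euler factor
`1 + 1/(p² - 1) = (1 - p⁻²)⁻¹`, that of `ζ(2)`, so it equals `π²/6` and cancels the shift of
`-ζ(2)α`. Absolute convergence follows from `#numerators ≤ (α + 1)φ(q)` and
`μ(q)²/(φ(q)σ(q)) ≤ q^(-3/2)`, the latter from `p^(3/2) ≤ p² - 1` at primes.
-/

open scoped BigOperators Real

open Classical in
/-- The summand of `S(α)` attached to a pair `(a,q)`: equals `μ(q)²/(φ(q)²σ(q))` when
`a, q > 0` are coprime and `a/q ∈ (0, α]`, and `0` otherwise. -/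
noncomputable def Ssummand (α : ℝ) (p : ℕ × ℕ) : ℝ :=
  if 0 < p.1 ∧ 0 < p.2 ∧ Nat.Coprime p.1 p.2 ∧ (p.1 : ℝ) / p.2 ≤ α then
    (ArithmeticFunction.moebius p.2 : ℝ) ^ 2 /
      ((Nat.totient p.2 : ℝ) ^ 2 * (ArithmeticFunction.sigma 1 p.2 : ℝ))
  else 0

/-- `S(α) = 1/2 - ζ(2)α + Σ_{a/q ∈ ℚ ∩ (0,α]} μ(q)²/(φ(q)²σ(q))`, with `ζ(2) = π²/6` and the
sum over lowest-terms fractions `a/q` with `a, q` coprime positive integers. -/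
noncomputable def Sfun (α : ℝ) : ℝ :=
  1 / 2 - (π ^ 2 / 6) * α + ∑' p : ℕ × ℕ, Ssummand α p

theorem le_of_primePow_le {R : Type*} [CommSemiring R] [PartialOrder R] [IsOrderedRing R]
    {f g : ℕ → R} (hf₁ : f 1 = 1) (hg₁ : g 1 = 1)
    (hf : ∀ {m n}, m.Coprime n → f (m * n) = f m * f n)
    (hg : ∀ {m n}, m.Coprime n → g (m * n) = g m * g n) (hf₀ : ∀ n, 0 ≤ f n)
    (hpow : ∀ p k, p.Prime → 0 < k → f (p ^ k) ≤ g (p ^ k)) {n : ℕ} (hn : n ≠ 0) :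
    f n ≤ g n := by
  induction n using Nat.recOnPosPrimePosCoprime with
  | prime_pow p k hp hk => exact hpow p k hp hk
  | zero => exact absurd rfl hn
  | one => rw [hf₁, hg₁]
  | coprime a b ha hb hab iha ihb =>
    rw [hf hab, hg hab]
    exact mul_le_mul (iha (by omega)) (ihb (by omega)) (hf₀ b) ((hf₀ a).trans (iha (by omega)))

theorem tsum_eq_tsum_of_tsum_primePow_eq {R : Type*} [NormedCommRing R] [CompleteSpace R]
    {f g : ℕ → R} (hf₁ : f 1 = 1) (hg₁ : g 1 = 1)
    (hf : ∀ {m n}, m.Coprime n → f (m * n) = f m * f n)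
    (hg : ∀ {m n}, m.Coprime n → g (m * n) = g m * g n)
    (hfs : Summable (‖f ·‖)) (hgs : Summable (‖g ·‖)) (hf₀ : f 0 = 0) (hg₀ : g 0 = 0)
    (h : ∀ p, p.Prime → ∑' e, f (p ^ e) = ∑' e, g (p ^ e)) :
    ∑' n, f n = ∑' n, g n := by
  refine (EulerProduct.eulerProduct_hasProd hf₁ hf hfs hf₀).unique ?_
  convert EulerProduct.eulerProduct_hasProd hg₁ hg hgs hg₀ using 2 with p
  exact h p p.prop

open ArithmeticFunction Finset

noncomputable def fracWeight (q : ℕ) : ℝ :=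
  (moebius q : ℝ) ^ 2 / ((Nat.totient q : ℝ) ^ 2 * (sigma 1 q : ℝ))

noncomputable def denomMass (q : ℕ) : ℝ := Nat.totient q * fracWeight q

lemma fracWeight_nonneg (q : ℕ) : 0 ≤ fracWeight q := by unfold fracWeight; positivity

lemma denomMass_nonneg (q : ℕ) : 0 ≤ denomMass q := by
  unfold denomMass; have := fracWeight_nonneg q; positivity

lemma denomMass_zero : denomMass 0 = 0 := by simp [denomMass]

lemma denomMass_one : denomMass 1 = 1 := by simp [denomMass, fracWeight]

lemma fracWeight_mul {m n : ℕ} (h : m.Coprime n) :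
    fracWeight (m * n) = fracWeight m * fracWeight n := by
  simp only [fracWeight, isMultiplicative_moebius.map_mul_of_coprime h, Nat.totient_mul h,
    isMultiplicative_sigma.map_mul_of_coprime h, Int.cast_mul, Nat.cast_mul]
  rw [div_mul_div_comm]
  ring

lemma denomMass_mul {m n : ℕ} (h : m.Coprime n) :
    denomMass (m * n) = denomMass m * denomMass n := by
  simp only [denomMass, fracWeight_mul h, Nat.totient_mul h, Nat.cast_mul]
  ring

lemma denomMass_prime {p : ℕ} (hp : p.Prime) : denomMass p = ((p : ℝ) ^ 2 - 1)⁻¹ := by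
  have hp1 : (1 : ℝ) < p := by exact_mod_cast hp.one_lt
  have hσ : sigma 1 p = p + 1 := by
    simpa [sum_range_succ, add_comm] using sigma_one_apply_prime_pow (i := 1) hp
  rw [denomMass, fracWeight, moebius_apply_prime hp, Nat.totient_prime hp, hσ,
    Nat.cast_sub hp.one_le]
  have : (p : ℝ) - 1 ≠ 0 := by linarith
  push_cast
  rw [show (p : ℝ) ^ 2 - 1 = (p - 1) * (p + 1) by ring]
  field_simp

lemma denomMass_prime_pow {p k : ℕ} (hp : p.Prime) (hk : 2 ≤ k) : denomMass (p ^ k) = 0 := by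
  simp [denomMass, fracWeight, moebius_apply_prime_pow hp (by omega : k ≠ 0),
    show k ≠ 1 by omega]

lemma rpow_three_halves_le_sq_sub_one {x : ℝ} (hx : 2 ≤ x) : x ^ (3 / 2 : ℝ) ≤ x ^ 2 - 1 := by
  have hx0 : 0 ≤ x := by linarith
  have hsq : (x ^ (3 / 2 : ℝ)) ^ 2 = x ^ 3 := by
    rw [← Real.rpow_natCast, ← Real.rpow_mul hx0]; norm_num
  refine (pow_le_pow_iff_left₀ (by positivity) (by nlinarith) two_ne_zero).1 ?_
  rw [hsq]
  nlinarith [mul_nonneg (mul_nonneg hx0 hx0) (sub_nonneg.2 hx)]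

lemma denomMass_le (n : ℕ) : denomMass n ≤ ((n : ℝ) ^ (3 / 2 : ℝ))⁻¹ := by
  rcases eq_or_ne n 0 with rfl | hn
  · simp [denomMass_zero]
  refine le_of_primePow_le (g := fun n : ℕ => ((n : ℝ) ^ (3 / 2 : ℝ))⁻¹) denomMass_one (by simp)
    denomMass_mul
    (fun h => by push_cast; rw [Real.mul_rpow (by positivity) (by positivity), mul_inv])
    denomMass_nonneg (fun p k hp hk => ?_) hn
  rcases (show k = 1 ∨ 2 ≤ k by omega) with rfl | hk
  · have hp2 : (2 : ℝ) ≤ p := by exact_mod_cast hp.two_le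
    rw [pow_one, denomMass_prime hp]
    exact inv_anti₀ (by positivity) (rpow_three_halves_le_sq_sub_one hp2)
  · rw [denomMass_prime_pow hp hk]
    positivity

lemma summable_denomMass : Summable denomMass :=
  Summable.of_nonneg_of_le denomMass_nonneg denomMass_le
    (Real.summable_nat_rpow_inv.2 (by norm_num))

lemma tsum_denomMass : ∑' n, denomMass n = π ^ 2 / 6 := by
  rw [← hasSum_zeta_two.tsum_eq]
  refine tsum_eq_tsum_of_tsum_primePow_eq denomMass_one (by simp) denomMass_mul
    (fun _ => by push_cast; rw [mul_pow, one_div_mul_one_div]) ?_ ?_ denomMass_zero (by simp)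
    (fun p hp => ?_)
  · simpa [abs_of_nonneg (denomMass_nonneg _)] using summable_denomMass
  · simp
  have hp2 : (2 : ℝ) ≤ p := by exact_mod_cast hp.two_le
  have hgeom : ∀ e : ℕ, 1 / ((p ^ e : ℕ) : ℝ) ^ 2 = ((p : ℝ) ^ 2)⁻¹ ^ e := fun e => by
    push_cast; ring
  rw [tsum_eq_sum (s := range 2) fun k hk => denomMass_prime_pow hp (by simp at hk; omega)]
  simp only [sum_range_succ, sum_range_zero, pow_zero, pow_one, denomMass_one,
    denomMass_prime hp, hgeom, zero_add]
  rw [tsum_geometric_of_lt_one (by positivity) (inv_lt_one_of_one_lt₀ (by nlinarith))]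
  have : (p : ℝ) ^ 2 - 1 ≠ 0 := by nlinarith
  field_simp
  ring

noncomputable def numerators (α : ℝ) (q : ℕ) : Finset ℕ :=
  {a ∈ Ico 1 (⌊α * q⌋₊ + 1) | q.Coprime a}

lemma Ssummand_eq (α : ℝ) (a q : ℕ) :
    Ssummand α (a, q) = if a ∈ numerators α q then fracWeight q else 0 := by
  rcases Nat.eq_zero_or_pos q with rfl | hq
  · simp [Ssummand, numerators]
  have hq' : (0 : ℝ) < q := by exact_mod_cast hq
  simp only [Ssummand, numerators, fracWeight, mem_filter, mem_Ico, hq, true_and,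
    Nat.lt_add_one_iff, Nat.coprime_comm (m := q)]
  congr 1
  refine propext ⟨fun ⟨ha, hcop, hle⟩ => ⟨⟨ha, ?_⟩, hcop⟩, fun ⟨⟨ha, hle⟩, hcop⟩ => ⟨ha, hcop, ?_⟩⟩
  · rwa [Nat.le_floor_iff' ha.ne', ← div_le_iff₀ hq']
  · rwa [Nat.le_floor_iff' (by omega), ← div_le_iff₀ hq'] at hle

lemma hasSum_Ssummand_fiber (α : ℝ) (q : ℕ) :
    HasSum (fun a => Ssummand α (a, q)) (#(numerators α q) * fracWeight q) := by
  simp_rw [Ssummand_eq]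
  have h : HasSum (fun a => if a ∈ numerators α q then fracWeight q else 0) _ :=
    hasSum_sum_of_ne_finset_zero fun a ha => if_neg ha
  rwa [sum_ite_mem, inter_self, sum_const, nsmul_eq_mul] at h

lemma card_numerators_le {α : ℝ} (hα : 0 ≤ α) (q : ℕ) :
    (#(numerators α q) : ℝ) ≤ (α + 1) * Nat.totient q := by
  rcases Nat.eq_zero_or_pos q with rfl | hq
  · simp [numerators]
  have hq' : (0 : ℝ) < q := by exact_mod_cast hq
  have hcard : #(numerators α q) ≤ Nat.totient q * (⌊α * q⌋₊ / q + 1) := by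
    simpa [numerators, add_comm] using Nat.Ico_filter_coprime_le 1 ⌊α * q⌋₊ hq.ne'
  have hdiv : ((⌊α * q⌋₊ / q : ℕ) : ℝ) ≤ α :=
    calc ((⌊α * q⌋₊ / q : ℕ) : ℝ) ≤ (⌊α * q⌋₊ : ℝ) / q := Nat.cast_div_le
      _ ≤ α * q / q := by gcongr; exact Nat.floor_le (by positivity)
      _ = α := mul_div_cancel_right₀ α hq'.ne'
  calc (#(numerators α q) : ℝ) ≤ Nat.totient q * (((⌊α * q⌋₊ / q : ℕ) : ℝ) + 1) := by
        exact_mod_cast hcard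
    _ ≤ (α + 1) * Nat.totient q := by nlinarith [(Nat.totient q).cast_nonneg (α := ℝ)]

lemma card_numerators_add_one {α : ℝ} (hα : 0 ≤ α) (q : ℕ) :
    #(numerators (α + 1) q) = #(numerators α q) + Nat.totient q := by
  have hfloor : ⌊(α + 1) * q⌋₊ = ⌊α * q⌋₊ + q := by
    rw [add_one_mul, Nat.floor_add_natCast (by positivity)]
  rw [numerators, numerators, hfloor, ← Nat.filter_coprime_Ico_eq_totient q (⌊α * q⌋₊ + 1),
    ← card_union_of_disjoint (disjoint_filter_filter
      (Ico_disjoint_Ico_consecutive _ _ _)), ← filter_union,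
    Ico_union_Ico_eq_Ico (by omega) (by omega), add_right_comm]

lemma Ssummand_nonneg (α : ℝ) : 0 ≤ Ssummand α := fun p => by
  rw [Ssummand_eq]; split_ifs <;> simp [fracWeight_nonneg]

lemma summable_card_numerators_mul_fracWeight {α : ℝ} (hα : 0 ≤ α) :
    Summable fun q => (#(numerators α q) : ℝ) * fracWeight q :=
  (summable_denomMass.mul_left (α + 1)).of_nonneg_of_le
    (fun q => mul_nonneg (Nat.cast_nonneg _) (fracWeight_nonneg q))
    fun q => by
      rw [denomMass, ← mul_assoc]
      exact mul_le_mul_of_nonneg_right (card_numerators_le hα q) (fracWeight_nonneg q)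

lemma summable_Ssummand {α : ℝ} (hα : 0 ≤ α) : Summable (Ssummand α) := by
  have hswap : Summable fun p : ℕ × ℕ => Ssummand α p.swap := by
    refine (summable_prod_of_nonneg fun p => Ssummand_nonneg α p.swap).2
      ⟨fun q => (hasSum_Ssummand_fiber α q).summable, ?_⟩
    simpa only [Prod.swap_prod_mk, (hasSum_Ssummand_fiber α _).tsum_eq]
      using summable_card_numerators_mul_fracWeight hα
  simpa using hswap.prod_symm

lemma tsum_Ssummand {α : ℝ} (hα : 0 ≤ α) :
    ∑' p, Ssummand α p = ∑' q, (#(numerators α q) : ℝ) * fracWeight q := by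
  rw [← (Equiv.prodComm ℕ ℕ).tsum_eq, Equiv.coe_prodComm,
    (summable_Ssummand hα).prod_symm.tsum_prod' fun q => (hasSum_Ssummand_fiber α q).summable]
  exact tsum_congr fun q => (hasSum_Ssummand_fiber α q).tsum_eq

lemma tsum_Ssummand_add_one {α : ℝ} (hα : 0 ≤ α) :
    ∑' p, Ssummand (α + 1) p = ∑' p, Ssummand α p + π ^ 2 / 6 := by
  rw [tsum_Ssummand hα, tsum_Ssummand (by linarith), ← tsum_denomMass,
    ← (summable_card_numerators_mul_fracWeight hα).tsum_add summable_denomMass]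
  congr 1 with q
  rw [card_numerators_add_one hα, denomMass]
  push_cast
  ring

/-- The sum defining `S(α)` converges absolutely, and `S` is periodic: `S(α+1) = S(α)` for
all `α > 0`. -/
theorem Sfun_summable_and_periodic :
    (∀ α : ℝ, 0 < α → Summable (Ssummand α)) ∧
    ∀ α : ℝ, 0 < α → Sfun (α + 1) = Sfun α := by
  refine ⟨fun α hα => summable_Ssummand hα.le, fun α hα => ?_⟩
  rw [Sfun, Sfun, tsum_Ssummand_add_one hα.le]
  ring
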